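/- Define E_{N,c}(x) = h Σ_{i=1}^{M} H(u_{0,i−1/2}/(D_h x)_{i−1/2})·(D_h x)_{i−1/2} + ⟨u₀, V_c∘x⟩_E + (1/2)⟨u₀, w_c[x]⟩_E for x ∈ Q, where (V_c∘x)_i = V_c(x_i). Then for every x ∈ Q, E_{N,c} is differentiable at x (with respect to the interior variables x₁, …, x_{M−1}) and, for every 1 ≤ i ≤ M−1, ∂E_{N,c}/∂x_i (x) = h·[(d_h G[x])_i + u_{0,i}·V_c′(x_i) + u_{0,i}·Ŝ_c[x]_i]; equivalently, the first variation of E_{N,c} with respect to the inner product ⟨·,·⟩_E is (δ_x E_{N,c}(x))_i = (d_h G[x])_i + u_{0,i}·V_c′(x_i) + u_{0,i}·Ŝ_c[x]_i for 1 ≤ i ≤ M−1. (Formula (4.4).) -/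

import Mathlib

open Finset Filter

noncomputable section

/-- Forward difference onto cells: `(D_h l)_{i-1/2} = (l_i - l_{i-1})/h` (use index `i`, `1 ≤ i ≤ M`). -/
def DhOp (h : ℝ) (l : ℕ → ℝ) (i : ℕ) : ℝ := (l i - l (i - 1)) / h

/-- Difference of a cell function back onto nodes: `(d_h φ)_i = (φ_{i+1/2} - φ_{i-1/2})/h`;
a cell function `φ` is encoded by `φ i = φ_{i-1/2}`. -/
def dhOp (h : ℝ) (φ : ℕ → ℝ) (i : ℕ) : ℝ := (φ (i + 1) - φ i) / h

/-- Central difference `D̃_h` on nodes. -/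
def DtOp (M : ℕ) (h : ℝ) (l : ℕ → ℝ) (i : ℕ) : ℝ :=
  if i = 0 then (l 1 - l 0) / h
  else if i = M then (l M - l (M - 1)) / h
  else (l (i + 1) - l (i - 1)) / (2 * h)

/-- Node inner product `⟨l, g⟩_E`. -/
def ipE (M : ℕ) (h : ℝ) (l g : ℕ → ℝ) : ℝ :=
  h * (l 0 * g 0 / 2 + (∑ i ∈ Finset.Ioo 0 M, l i * g i) + l M * g M / 2)

/-- Cell inner product `⟨φ, ψ⟩_C`. -/
def ipC (M : ℕ) (h : ℝ) (φ ψ : ℕ → ℝ) : ℝ :=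
  h * ∑ i ∈ Finset.Icc 1 M, φ i * ψ i

/-- The admissible (ordered) set `Q`. -/
def inQ (M : ℕ) (X0 XM : ℝ) (l : ℕ → ℝ) : Prop :=
  l 0 = X0 ∧ l M = XM ∧ ∀ i, 1 ≤ i → i ≤ M → l (i - 1) < l i

/-- The closure `Q̄` of the admissible set. -/
def inQbar (M : ℕ) (X0 XM : ℝ) (l : ℕ → ℝ) : Prop :=
  l 0 = X0 ∧ l M = XM ∧ ∀ i, 1 ≤ i → i ≤ M → l (i - 1) ≤ l i

/-- `Ŝ[x]_i = ⟨K(x_i - y), u₀(Y)⟩_E` for a kernel `K` (e.g. `K = W_c'`);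
also used as `w[x]_i` when `K = W` itself. -/
def Shat (M : ℕ) (h : ℝ) (K : ℝ → ℝ) (u0 x : ℕ → ℝ) (i : ℕ) : ℝ :=
  ipE M h (fun j => K (x i - x j)) u0

/-- The cell function `G[x]_{i-1/2} = s·H'(s) - H(s)`, `s = u_{0,i-1/2}/(D_h x)_{i-1/2}`. -/
def Gcell (h : ℝ) (H : ℝ → ℝ) (u0half x : ℕ → ℝ) (i : ℕ) : ℝ :=
  u0half i / DhOp h x i * deriv H (u0half i / DhOp h x i) - H (u0half i / DhOp h x i)

/-- The mobility coefficient `c[x]_i = u_{0,i}² / ((D̃_h x)_i · f(u_{0,i}/(D̃_h x)_i))`. -/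
def cCoef (M : ℕ) (h : ℝ) (f : ℝ → ℝ) (u0 x : ℕ → ℝ) (i : ℕ) : ℝ :=
  u0 i ^ 2 / (DtOp M h x i * f (u0 i / DtOp M h x i))

/-- `xp` is a scheme update of `x`: the fully discrete convex-splitting scheme equations. -/
def SchemeUpdate (M : ℕ) (h τ : ℝ) (H f Vc Ve Wc We : ℝ → ℝ)
    (u0 u0half x xp : ℕ → ℝ) : Prop :=
  ∀ i, 1 ≤ i → i ≤ M - 1 →
    cCoef M h f u0 x i * (xp i - x i) / τ =
      -dhOp h (Gcell h H u0half xp) i - u0 i * deriv Vc (xp i)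
        + u0 i * deriv Ve (x i)
        - u0 i * Shat M h (deriv Wc) u0 xp i + u0 i * Shat M h (deriv We) u0 x i

/-- The discrete total energy `E_N`. -/
def EN (M : ℕ) (h : ℝ) (H V W : ℝ → ℝ) (u0 u0half x : ℕ → ℝ) : ℝ :=
  h * ∑ i ∈ Finset.Icc 1 M, H (u0half i / DhOp h x i) * DhOp h x i
    + ipE M h u0 (fun i => V (x i))
    + 1 / 2 * ipE M h u0 (fun i => Shat M h W u0 x i)

/-- The convex part `E_{N,c}` of the discrete total energy. -/
def ENc (M : ℕ) (h : ℝ) (H Vc Wc : ℝ → ℝ) (u0 u0half x : ℕ → ℝ) : ℝ :=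
  h * ∑ i ∈ Finset.Icc 1 M, H (u0half i / DhOp h x i) * DhOp h x i
    + ipE M h u0 (fun i => Vc (x i))
    + 1 / 2 * ipE M h u0 (fun i => Shat M h Wc u0 x i)

/-- The concave (subtracted convex) part `E_{N,e}` of the discrete total energy. -/
def ENe (M : ℕ) (h : ℝ) (Ve We : ℝ → ℝ) (u0 x : ℕ → ℝ) : ℝ :=
  ipE M h u0 (fun i => Ve (x i)) + 1 / 2 * ipE M h u0 (fun i => Shat M h We u0 x i)

/-- The convex functional `J` whose minimizer over `Q` is the scheme update of `xn`. -/
def Jfun (M : ℕ) (h τ : ℝ) (H f Vc Ve Wc We : ℝ → ℝ)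
    (u0 u0half xn z : ℕ → ℝ) : ℝ :=
  1 / (2 * τ) * ipE M h (fun i => cCoef M h f u0 xn i * (z i - xn i)) (fun i => z i - xn i)
    + h * ∑ i ∈ Finset.Icc 1 M, H (u0half i / DhOp h z i) * DhOp h z i
    + ipE M h u0 (fun i => Vc (z i))
    + 1 / 2 * ipE M h u0 (fun i => Shat M h Wc u0 z i)
    - ipE M h (fun i => u0 i * deriv Ve (xn i)) z
    - ipE M h (fun i => u0 i * Shat M h (deriv We) u0 xn i) z


/-!
The partial derivative in `x_i` is the first variation along `v = e_i`, so it suffices to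
differentiate `ε ↦ E_{N,c}(x + ε v)` at `0` for directions `v` with `v₀ = v_M = 0`. Since
`d ↦ d · H(a / d)` has derivative `H(s) - s H'(s) = -G` at `s = a / d`, the entropy term
contributes `-⟨G[x], D_h v⟩_C`, which discrete summation by parts turns into
`⟨d_h G[x], v⟩_E`. The potential term contributes `⟨u₀ V_c'(x), v⟩_E`. In the interaction
term `½ ∑_{j,k} W_c(x_j - x_k)` (trapezoidal weights understood), the derivatives with respect
to `x_j` and to `x_k` contribute equally because `W_c'` is odd, which cancels the `½`. Finally
`⟨φ, e_i⟩_E = h φ_i` for an interior node `i`.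
-/

lemma Function.update_eq_add_mul_single (x : ℕ → ℝ) (i : ℕ) (s : ℝ) :
    Function.update x i s = fun j => x j + (s - x i) * (Pi.single i (1 : ℝ) : ℕ → ℝ) j := by
  funext j
  by_cases hj : j = i
  · subst hj; simp
  · simp [hj]

lemma hasDerivAt_line (a b ε : ℝ) : HasDerivAt (fun ε => a + ε * b) b ε := by
  simpa using ((hasDerivAt_id ε).mul_const b).const_add a

lemma deriv_neg_of_even {W : ℝ → ℝ} (hW : Differentiable ℝ W) (heven : ∀ t, W (-t) = W t)
    (t : ℝ) : deriv W (-t) = -deriv W t := by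
  have hcomp := (hW (-t)).hasDerivAt.comp t (hasDerivAt_neg t)
  rw [show W ∘ Neg.neg = W from funext heven, mul_neg_one] at hcomp
  linarith [hcomp.unique (hW t).hasDerivAt]

lemma HasDerivAt.perspective {H : ℝ → ℝ} {H' a d : ℝ} (hH : HasDerivAt H H' (a / d))
    (hd : d ≠ 0) : HasDerivAt (fun d => H (a / d) * d) (H (a / d) - a / d * H') d := by
  have hdiv : HasDerivAt (fun d => a / d) (-a / d ^ 2) d := by
    simpa using (hasDerivAt_const d a).fun_div (hasDerivAt_id' d) hd
  refine ((hH.comp d hdiv).fun_mul (hasDerivAt_id' d)).congr_deriv ?_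
  simp only [Function.comp_apply]
  field_simp
  ring

lemma sum_range_mul_sub_eq (φ v : ℕ → ℝ) (n : ℕ) :
    ∑ j ∈ range n, φ (j + 1) * (v (j + 1) - v j) =
      φ n * v n - φ 0 * v 0 - ∑ j ∈ range n, (φ (j + 1) - φ j) * v j := by
  induction n with
  | zero => simp
  | succ n ih => rw [sum_range_succ, ih, sum_range_succ]; ring

lemma sum_Icc_mul_sub_eq_neg_sum_Ioo {M : ℕ} (φ v : ℕ → ℝ) (hv0 : v 0 = 0) (hvM : v M = 0) :
    ∑ j ∈ Icc 1 M, φ j * (v j - v (j - 1)) = -∑ j ∈ Ioo 0 M, (φ (j + 1) - φ j) * v j := by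
  have hIcc : ∑ j ∈ Icc 1 M, φ j * (v j - v (j - 1)) =
      ∑ j ∈ range M, φ (j + 1) * (v (j + 1) - v j) := by
    rw [← Finset.Ico_add_one_right_eq_Icc, sum_Ico_eq_sum_range]
    simp [add_comm]
  have hIoo : ∑ j ∈ range M, (φ (j + 1) - φ j) * v j =
      ∑ j ∈ Ioo 0 M, (φ (j + 1) - φ j) * v j := by
    rcases Nat.eq_zero_or_pos M with rfl | hM
    · simp
    rw [range_eq_Ico, sum_eq_sum_Ico_succ_bot hM, Finset.Ico_add_one_left_eq_Ioo, hv0, mul_zero,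
      zero_add]
  rw [hIcc, sum_range_mul_sub_eq, hv0, hvM, hIoo]
  ring

lemma sum_sum_mul_sub_of_antisymm {ι : Type*} (s : Finset ι) (a v : ι → ℝ) (K : ι → ι → ℝ)
    (hK : ∀ j k, K k j = -K j k) :
    ∑ j ∈ s, ∑ k ∈ s, a j * a k * (K j k * (v j - v k)) =
      2 * ∑ j ∈ s, ∑ k ∈ s, a j * a k * (K j k * v j) := by
  have hswap : ∑ j ∈ s, ∑ k ∈ s, a j * a k * (K j k * v k) =
      -∑ j ∈ s, ∑ k ∈ s, a j * a k * (K j k * v j) := by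
    rw [sum_comm, ← sum_neg_distrib]
    refine sum_congr rfl fun j _ => ?_
    rw [← sum_neg_distrib]
    refine sum_congr rfl fun k _ => ?_
    rw [hK]
    ring
  simp only [mul_sub, sum_sub_distrib, hswap]
  ring

section ipE

variable {M : ℕ} {h : ℝ}

def trapWeight (M : ℕ) (h : ℝ) (j : ℕ) : ℝ := if j = 0 ∨ j = M then h / 2 else h

lemma ipE_eq_sum (hM : M ≠ 0) (l g : ℕ → ℝ) :
    ipE M h l g = ∑ j ∈ range (M + 1), trapWeight M h j * (l j * g j) := by
  have hrange : range (M + 1) = insert 0 (insert M (Ioo 0 M)) := by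
    ext j; simp only [mem_range, mem_insert, mem_Ioo]; omega
  have hinterior : ∀ j ∈ Ioo 0 M, trapWeight M h j * (l j * g j) = h * (l j * g j) := by
    intro j hj
    rw [mem_Ioo] at hj
    rw [trapWeight, if_neg (by omega)]
  rw [hrange, sum_insert (by simp; omega), sum_insert (by simp), sum_congr rfl hinterior,
    ← mul_sum, ipE, trapWeight, if_pos (Or.inl rfl), trapWeight, if_pos (Or.inr rfl)]
  ring

lemma ipE_comm (l g : ℕ → ℝ) : ipE M h l g = ipE M h g l := by
  simp only [ipE, mul_comm (l _) (g _)]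

lemma ipE_add_left (f g l : ℕ → ℝ) :
    ipE M h (fun j => f j + g j) l = ipE M h f l + ipE M h g l := by
  simp only [ipE, add_mul, sum_add_distrib]
  ring

lemma ipE_mul_right (l c g : ℕ → ℝ) :
    ipE M h l (fun j => c j * g j) = ipE M h (fun j => l j * c j) g := by
  simp only [ipE, mul_assoc]

lemma ipE_mul_const_left (f g : ℕ → ℝ) (c : ℝ) :
    ipE M h (fun j => f j * c) g = ipE M h f g * c := by
  simp only [ipE, mul_right_comm (f _) c, ← sum_mul]
  ring

lemma ipE_of_boundary_eq_zero (l : ℕ → ℝ) {v : ℕ → ℝ} (hv0 : v 0 = 0) (hvM : v M = 0) :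
    ipE M h l v = h * ∑ j ∈ Ioo 0 M, l j * v j := by
  simp [ipE, hv0, hvM]

lemma ipE_single (l : ℕ → ℝ) {i : ℕ} (hi0 : i ≠ 0) (hiM : i < M) :
    ipE M h l (Pi.single i 1) = h * l i := by
  rw [ipE_of_boundary_eq_zero l (Pi.single_eq_of_ne (Ne.symm hi0) _)
    (Pi.single_eq_of_ne hiM.ne' _)]
  simp [Pi.single_apply, hiM, Nat.pos_of_ne_zero hi0]

lemma ipE_ipE_eq_sum_sum (hM : M ≠ 0) (l : ℕ → ℝ) (F : ℕ → ℕ → ℝ) :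
    ipE M h l (fun j => ipE M h (F j) l) =
      ∑ j ∈ range (M + 1), ∑ k ∈ range (M + 1),
        trapWeight M h j * l j * (trapWeight M h k * l k) * F j k := by
  simp only [ipE_eq_sum hM, mul_sum]
  refine sum_congr rfl fun j _ => sum_congr rfl fun k _ => ?_
  ring

lemma ipC_DhOp_eq_neg_ipE_dhOp (hh : h ≠ 0) (φ : ℕ → ℝ) {v : ℕ → ℝ} (hv0 : v 0 = 0)
    (hvM : v M = 0) : ipC M h φ (DhOp h v) = -ipE M h (dhOp h φ) v := by
  calc ipC M h φ (DhOp h v) = ∑ j ∈ Icc 1 M, φ j * (v j - v (j - 1)) := by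
        rw [ipC, mul_sum]
        refine sum_congr rfl fun j _ => ?_
        rw [DhOp]
        field_simp
    _ = -∑ j ∈ Ioo 0 M, (φ (j + 1) - φ j) * v j := sum_Icc_mul_sub_eq_neg_sum_Ioo φ v hv0 hvM
    _ = -ipE M h (dhOp h φ) v := by
        rw [ipE_of_boundary_eq_zero _ hv0 hvM, mul_sum]
        congr 1
        refine sum_congr rfl fun j _ => ?_
        rw [dhOp]
        field_simp

lemma HasDerivAt.ipE_right {F : ℕ → ℝ → ℝ} {F' : ℕ → ℝ} {t : ℝ} (l : ℕ → ℝ)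
    (hF : ∀ j, HasDerivAt (F j) (F' j) t) :
    HasDerivAt (fun s => ipE M h l (fun j => F j s)) (ipE M h l F') t := by
  unfold ipE
  refine HasDerivAt.const_mul h ?_
  exact .fun_add (.fun_add (((hF 0).const_mul (l 0)).div_const 2)
    (HasDerivAt.fun_sum fun j _ => (hF j).const_mul (l j))) (((hF M).const_mul (l M)).div_const 2)

lemma HasDerivAt.ipE_left {F : ℕ → ℝ → ℝ} {F' : ℕ → ℝ} {t : ℝ} (g : ℕ → ℝ)
    (hF : ∀ j, HasDerivAt (F j) (F' j) t) :
    HasDerivAt (fun s => ipE M h (fun j => F j s) g) (ipE M h F' g) t := by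
  simp only [ipE_comm _ g]
  exact HasDerivAt.ipE_right g hF

end ipE

lemma hasDerivAt_DhOp_line (h : ℝ) (x v : ℕ → ℝ) (j : ℕ) (ε : ℝ) :
    HasDerivAt (fun ε => DhOp h (fun k => x k + ε * v k) j) (DhOp h v j) ε :=
  ((hasDerivAt_line _ _ ε).fun_sub (hasDerivAt_line _ _ ε)).div_const h

section ENc

variable {M : ℕ} {h : ℝ} {H V W : ℝ → ℝ} {u0half x v : ℕ → ℝ}

lemma hasDerivAt_entropy_line (hh : h ≠ 0) (hD : ∀ j ∈ Icc 1 M, DhOp h x j ≠ 0)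
    (hH : ∀ j ∈ Icc 1 M, DifferentiableAt ℝ H (u0half j / DhOp h x j))
    (hv0 : v 0 = 0) (hvM : v M = 0) :
    HasDerivAt (fun ε => h * ∑ j ∈ Icc 1 M, H (u0half j / DhOp h (fun k => x k + ε * v k) j)
        * DhOp h (fun k => x k + ε * v k) j)
      (ipE M h (dhOp h (Gcell h H u0half x)) v) 0 := by
  have hterm : ∀ j ∈ Icc 1 M, HasDerivAt
      (fun ε => H (u0half j / DhOp h (fun k => x k + ε * v k) j)
        * DhOp h (fun k => x k + ε * v k) j)
      (-Gcell h H u0half x j * DhOp h v j) 0 := by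
    intro j hj
    refine (((hH j hj).hasDerivAt.perspective (hD j hj)).comp_of_eq 0
      (hasDerivAt_DhOp_line h x v j 0) (by simp)).congr_deriv ?_
    rw [Gcell]
    ring
  rw [← neg_neg (ipE M h _ v), ← ipC_DhOp_eq_neg_ipE_dhOp hh _ hv0 hvM]
  refine ((HasDerivAt.fun_sum hterm).const_mul h).congr_deriv ?_
  simp [ipC, sum_neg_distrib]

lemma hasDerivAt_potential_line (hV : Differentiable ℝ V) (l : ℕ → ℝ) :
    HasDerivAt (fun ε => ipE M h l (fun j => V (x j + ε * v j)))
      (ipE M h (fun j => l j * deriv V (x j)) v) 0 := by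
  rw [← ipE_mul_right]
  exact HasDerivAt.ipE_right l fun j =>
    (hV (x j)).hasDerivAt.comp_of_eq 0 (hasDerivAt_line (x j) (v j) 0) (by simp)

lemma hasDerivAt_interaction_line (hM : M ≠ 0) (hW : Differentiable ℝ W)
    (heven : ∀ t, W (-t) = W t) (l : ℕ → ℝ) :
    HasDerivAt (fun ε => 1 / 2 * ipE M h l (fun j => Shat M h W l (fun k => x k + ε * v k) j))
      (ipE M h (fun j => l j * Shat M h (deriv W) l x j) v) 0 := by
  have hS : ∀ j, HasDerivAt (fun ε => Shat M h W l (fun k => x k + ε * v k) j)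
      (ipE M h (fun k => deriv W (x j - x k) * (v j - v k)) l) 0 := fun j =>
    HasDerivAt.ipE_left l fun k => (hW _).hasDerivAt.comp_of_eq 0
      ((hasDerivAt_line _ _ 0).fun_sub (hasDerivAt_line _ _ 0)) (by simp)
  have hK : ∀ j k, deriv W (x k - x j) = -deriv W (x j - x k) := fun j k => by
    rw [← deriv_neg_of_even hW heven, neg_sub]
  refine ((HasDerivAt.ipE_right l hS).const_mul (1 / 2)).congr_deriv ?_
  rw [ipE_ipE_eq_sum_sum hM, sum_sum_mul_sub_of_antisymm _ _ _ _ hK,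
    ← ipE_ipE_eq_sum_sum hM l (fun j k => deriv W (x j - x k) * v j)]
  simp only [ipE_mul_const_left, ipE_mul_right, Shat]
  ring

end ENc

def ENcVariation (M : ℕ) (h : ℝ) (H Vc Wc : ℝ → ℝ) (u0 u0half x : ℕ → ℝ) (i : ℕ) : ℝ :=
  dhOp h (Gcell h H u0half x) i + u0 i * deriv Vc (x i) + u0 i * Shat M h (deriv Wc) u0 x i

theorem hasDerivAt_ENc_line {M : ℕ} {h : ℝ} {H Vc Wc : ℝ → ℝ} {u0 u0half x v : ℕ → ℝ}
    (hM : M ≠ 0) (hh : h ≠ 0) (hD : ∀ j ∈ Icc 1 M, DhOp h x j ≠ 0)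
    (hH : ∀ j ∈ Icc 1 M, DifferentiableAt ℝ H (u0half j / DhOp h x j))
    (hVc : Differentiable ℝ Vc) (hWc : Differentiable ℝ Wc) (hWceven : ∀ t, Wc (-t) = Wc t)
    (hv0 : v 0 = 0) (hvM : v M = 0) :
    HasDerivAt (fun ε => ENc M h H Vc Wc u0 u0half (fun j => x j + ε * v j))
      (ipE M h (ENcVariation M h H Vc Wc u0 u0half x) v) 0 := by
  refine (((hasDerivAt_entropy_line hh hD hH hv0 hvM).add (hasDerivAt_potential_line hVc u0)).add
    (hasDerivAt_interaction_line hM hWc hWceven u0)).congr_deriv ?_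
  unfold ENcVariation
  rw [ipE_add_left, ipE_add_left]

theorem ENc_first_variation_general
    (M : ℕ) (X0 XM : ℝ) (hX : X0 < XM)
    (h : ℝ) (hh : h = (XM - X0) / (M : ℝ))
    (H Vc Wc : ℝ → ℝ)
    (hHreg : ContDiffOn ℝ 1 H (Set.Ioi 0))
    (hVcreg : ContDiff ℝ 1 Vc)
    (hWcreg : ContDiff ℝ 1 Wc)
    (hWceven : ∀ s : ℝ, Wc (-s) = Wc s)
    (u0 u0half : ℕ → ℝ)
    (hu0half : ∀ i, 1 ≤ i → i ≤ M → 0 < u0half i)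
    (x : ℕ → ℝ) (hx : inQ M X0 XM x) :
    ∀ i, 1 ≤ i → i ≤ M - 1 →
      HasDerivAt (fun s => ENc M h H Vc Wc u0 u0half (Function.update x i s))
        (h * (dhOp h (Gcell h H u0half x) i + u0 i * deriv Vc (x i)
          + u0 i * Shat M h (deriv Wc) u0 x i))
        (x i) := by
  intro i hi1 hiM
  have hM : M ≠ 0 := by omega
  have hpos : 0 < h := hh ▸ div_pos (sub_pos.2 hX) (Nat.cast_pos.2 (Nat.pos_of_ne_zero hM))
  have hD : ∀ j ∈ Icc 1 M, 0 < DhOp h x j := fun j hj =>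
    div_pos (sub_pos.2 (hx.2.2 j (mem_Icc.1 hj).1 (mem_Icc.1 hj).2)) hpos
  have hH : ∀ j ∈ Icc 1 M, DifferentiableAt ℝ H (u0half j / DhOp h x j) := fun j hj =>
    (hHreg.differentiableOn one_ne_zero).differentiableAt <| Ioi_mem_nhds <|
      div_pos (hu0half j (mem_Icc.1 hj).1 (mem_Icc.1 hj).2) (hD j hj)
  have hline := hasDerivAt_ENc_line (u0 := u0) (v := Pi.single i 1) hM hpos.ne'
    (fun j hj => (hD j hj).ne') hH (hVcreg.differentiable one_ne_zero)
    (hWcreg.differentiable one_ne_zero) hWceven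
    (Pi.single_eq_of_ne (by omega) _) (Pi.single_eq_of_ne (by omega) _)
  rw [ipE_single _ (by omega) (by omega), ← sub_self (x i)] at hline
  simp only [Function.update_eq_add_mul_single]
  exact hline.comp_sub_const (x i) (x i)

/-- Formula (4.4): the partial derivative of `E_{N,c}` with respect to an interior node
`x_i` is `h·[(d_h G[x])_i + u_{0,i}·V_c'(x_i) + u_{0,i}·Ŝ_c[x]_i]`. -/
theorem ENc_first_variation
    (M : ℕ) (hM : 2 ≤ M) (X0 XM : ℝ) (hX : X0 < XM)
    (h : ℝ) (hh : h = (XM - X0) / (M : ℝ)) (τ : ℝ) (hτ : 0 < τ)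
    (H f Vc Ve Wc We : ℝ → ℝ)
    (hHconv : ConvexOn ℝ (Set.Ioi 0) H) (hHreg : ContDiffOn ℝ 1 H (Set.Ioi 0))
    (hf : ∀ s : ℝ, 0 < s → 0 < f s)
    (hVcconv : ConvexOn ℝ Set.univ Vc) (hVcreg : ContDiff ℝ 1 Vc)
    (hVeconv : ConvexOn ℝ Set.univ Ve) (hVereg : ContDiff ℝ 1 Ve)
    (hWcconv : ConvexOn ℝ Set.univ Wc) (hWcreg : ContDiff ℝ 1 Wc)
    (hWeconv : ConvexOn ℝ Set.univ We) (hWereg : ContDiff ℝ 1 We)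
    (hWceven : ∀ s : ℝ, Wc (-s) = Wc s) (hWeeven : ∀ s : ℝ, We (-s) = We s)
    (u0 u0half : ℕ → ℝ)
    (hu0 : ∀ i ≤ M, 0 < u0 i)
    (hu0half : ∀ i, 1 ≤ i → i ≤ M → 0 < u0half i)
    (x : ℕ → ℝ) (hx : inQ M X0 XM x) :
    ∀ i, 1 ≤ i → i ≤ M - 1 →
      HasDerivAt (fun s => ENc M h H Vc Wc u0 u0half (Function.update x i s))
        (h * (dhOp h (Gcell h H u0half x) i + u0 i * deriv Vc (x i)
          + u0 i * Shat M h (deriv Wc) u0 x i))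
        (x i) :=
  ENc_first_variation_general M X0 XM hX h hh H Vc Wc hHreg hVcreg hWcreg hWceven u0 u0half hu0half
    x hx
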